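/- arXiv:0711.3849 — 7 statements merged into one kernel-verified Lean document; each statement's English description precedes it below -/
import Mathlib

section
/- Let F be a field with char F ≠ 2 and θ ∈ Fˣ. Let a_θ = [[0,1],[θ,0]] and let M ∈ GL₄(F) be the block-diagonal matrix diag(a_θ, a_θ). For x = (x₁,x₂,x₃,x₄,x₅) ∈ F⁵ let T(x) be the 4×4 matrix with rows (−x₃/2, x₄, x₁/2, 0), (x₂/2, x₃/2, 0, −x₁/2), (x₅, 0, x₃/2, x₄), (0, −x₅, x₂/2, −x₃/2). Then M·T(x₁,x₂,x₃,x₄,x₅)·M⁻¹ = T(−x₁, 2θx₄, −x₃, x₂/(2θ), −x₅). In other words, under the identification x ↦ T(x), conjugation by M acts on F⁵ by the linear map (x₁,x₂,x₃,x₄,x₅) ↦ (−x₁, 2θx₄, −x₃, x₂/(2θ), −x₅). -/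
open Matrix

/-!
Since `a_θ² = θ`, the matrix `M = diag(a_θ, a_θ)` satisfies `M² = θ`, so `M⁻¹ = θ⁻¹ M` and the
claim becomes the polynomial identity `M T(x) M = θ T(x')`, checked entrywise.
-/

section

variable {F : Type*} [Field F]

def diagATheta (θ : F) : Matrix (Fin 4) (Fin 4) F :=
  !![0, 1, 0, 0; θ, 0, 0, 0; 0, 0, 0, 1; 0, 0, θ, 0]

def tMatrix (x : Fin 5 → F) : Matrix (Fin 4) (Fin 4) F :=
  !![-(x 2)/2,  x 3,      (x 0)/2,  0;
     (x 1)/2,   (x 2)/2,  0,        -(x 0)/2;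
     x 4,       0,        (x 2)/2,  x 3;
     0,         -(x 4),   (x 1)/2,  -(x 2)/2]

theorem diagATheta_mul_self (θ : F) : diagATheta θ * diagATheta θ = θ • 1 := by
  ext i j
  fin_cases i <;> fin_cases j <;> simp [diagATheta, Matrix.mul_apply, Fin.sum_univ_succ]

theorem Matrix.inv_eq_inv_smul_of_mul_self_eq_smul_one {n : Type*} [Fintype n] [DecidableEq n]
    {A : Matrix n n F} {c : F} (hc : c ≠ 0) (hA : A * A = c • 1) : A⁻¹ = c⁻¹ • A := by
  refine Matrix.inv_eq_right_inv ?_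
  rw [Matrix.mul_smul, hA, smul_smul, inv_mul_cancel₀ hc, one_smul]

theorem diagATheta_mul_tMatrix_mul_diagATheta (h2 : (2 : F) ≠ 0) {θ : F} (hθ : θ ≠ 0)
    (x : Fin 5 → F) :
    diagATheta θ * tMatrix x * diagATheta θ
      = θ • tMatrix ![-(x 0), 2*θ*(x 3), -(x 2), (x 1)/(2*θ), -(x 4)] := by
  ext i j
  fin_cases i <;> fin_cases j <;>
    simp [diagATheta, tMatrix, Matrix.mul_apply, Fin.sum_univ_succ] <;> field_simp

end

/-- conjugation by `M = diag(a_θ, a_θ)` acts, under the identification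
`x ↦ T(x)` of `F⁵` with `X`, by `(x₁,x₂,x₃,x₄,x₅) ↦ (−x₁, 2θx₄, −x₃, x₂/(2θ), −x₅)`. -/
theorem stmt_1 {F : Type*} [Field F] (h2 : (2 : F) ≠ 0) (θ : F) (hθ : θ ≠ 0)
    (T : (Fin 5 → F) → Matrix (Fin 4) (Fin 4) F)
    (hT : ∀ x : Fin 5 → F, T x =
      !![-(x 2)/2,  x 3,      (x 0)/2,  0;
         (x 1)/2,   (x 2)/2,  0,        -(x 0)/2;
         x 4,       0,        (x 2)/2,  x 3;
         0,         -(x 4),   (x 1)/2,  -(x 2)/2])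
    (M : Matrix (Fin 4) (Fin 4) F)
    (hM : M = !![0,1,0,0; θ,0,0,0; 0,0,0,1; 0,0,θ,0]) :
    ∀ x : Fin 5 → F,
      M * T x * M⁻¹
        = T ![-(x 0), 2*θ*(x 3), -(x 2), (x 1)/(2*θ), -(x 4)] := by
  obtain rfl : T = tMatrix := funext hT
  obtain rfl : M = diagATheta θ := hM
  intro x
  rw [inv_eq_inv_smul_of_mul_self_eq_smul_one hθ (diagATheta_mul_self θ), Matrix.mul_smul,
    diagATheta_mul_tMatrix_mul_diagATheta h2 hθ, smul_smul, inv_mul_cancel₀ hθ, one_smul]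
end

section
/- Let F be a field with char F ≠ 2 and let e₃ = (0,0,1,0,0) ∈ F⁵. For g ∈ G the following are equivalent: (i) g·e₃ = e₃; (ii) g₃₃ = 1, g_{i3} = 0 for all i ≠ 3, g_{3j} = 0 for all j ≠ 3, and the 4×4 matrix m obtained from g by deleting the third row and third column satisfies ᵗm·J₄·m = J₄ and det m = 1, where J₄ is the 4×4 matrix with 1's on the antidiagonal and 0's elsewhere. Moreover, Q(g·e₃, g·e₃) = 1 for every g ∈ G, so g ↦ g·e₃ maps G into the sphere {v ∈ F⁵ : Q(v,v) = 1}. -/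
/-!
The vector `g e₃` is the third column of `g`, and `g` preserves `Q`, so `Q(g e₃, g e₃) = Q(e₃, e₃) = 1`.
If `g e₃ = e₃`, then `g` also fixes the `Q`-dual row vector `e₃ᵀ J = e₃ᵀ` from the right, so the
third row of `g` is `e₃ᵀ` as well. Hence `g` is block diagonal with blocks `1` and `m`; the
relation `gᵀ J g = J` restricts to `mᵀ J₄ m = J₄`, and Laplace expansion along the third column
gives `det m = det g = 1`.
-/

open Matrix

section Isometry

variable {R : Type*} [CommRing R]

theorem mulVec_single_one_eq_self_iff {ι : Type*} [Fintype ι] [DecidableEq ι]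
    {g : Matrix ι ι R} {p : ι} :
    g *ᵥ Pi.single p 1 = Pi.single p 1 ↔ g p p = 1 ∧ ∀ i ≠ p, g i p = 0 := by
  rw [mulVec_single_one, funext_iff]
  refine ⟨fun h => ⟨by simpa using h p, fun i hi => by simpa [hi] using h i⟩, fun ⟨hpp, h⟩ i => ?_⟩
  by_cases hi : i = p
  · subst hi
    simpa using hpp
  · simpa [hi] using h i hi

theorem vecMul_mul_eq_of_mulVec_eq {ι : Type*} [Fintype ι] {J g : Matrix ι ι R} {v : ι → R}
    (hg : gᵀ * J * g = J) (hv : g *ᵥ v = v) : (v ᵥ* J) ᵥ* g = v ᵥ* J :=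
  calc (v ᵥ* J) ᵥ* g = ((g *ᵥ v) ᵥ* J) ᵥ* g := by rw [hv]
    _ = v ᵥ* (gᵀ * J * g) := by
      rw [← vecMul_transpose, vecMul_vecMul, vecMul_vecMul, Matrix.mul_assoc]
    _ = v ᵥ* J := by rw [hg]

theorem dotProduct_mulVec_mulVec_of_transpose_mul_mul_eq {ι : Type*} [Fintype ι]
    {J g : Matrix ι ι R} (hg : gᵀ * J * g = J) (v : ι → R) :
    g *ᵥ v ⬝ᵥ J *ᵥ (g *ᵥ v) = v ⬝ᵥ J *ᵥ v := by
  rw [mulVec_mulVec, dotProduct_mulVec, ← vecMul_transpose, vecMul_vecMul, ← dotProduct_mulVec,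
    ← Matrix.mul_assoc, hg]

variable {n : ℕ}

theorem submatrix_transpose_mul_mul_of_row_eq_zero {J g : Matrix (Fin (n + 1)) (Fin (n + 1)) R}
    {p : Fin (n + 1)} (hrow : ∀ j ≠ p, g p j = 0) :
    (gᵀ * J * g).submatrix p.succAbove p.succAbove =
      (g.submatrix p.succAbove p.succAbove)ᵀ * J.submatrix p.succAbove p.succAbove *
        g.submatrix p.succAbove p.succAbove := by
  have hrow' : ∀ a, g p (p.succAbove a) = 0 := fun a => hrow _ (p.succAbove_ne a)
  ext a b
  simp [mul_apply, Fin.sum_univ_succAbove _ p, hrow', Finset.sum_mul]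

theorem det_eq_mul_det_submatrix_of_col_eq_zero {g : Matrix (Fin (n + 1)) (Fin (n + 1)) R}
    {p : Fin (n + 1)} (hcol : ∀ i ≠ p, g i p = 0) :
    g.det = g p p * (g.submatrix p.succAbove p.succAbove).det := by
  rw [det_succ_column g p, Finset.sum_eq_single p (fun i _ hi => by rw [hcol i hi]; ring)
    (by simp)]
  simp [← two_mul, pow_mul]

end Isometry

theorem stmt_2_general {F : Type*} [Field F]
    (J : Matrix (Fin 5) (Fin 5) F)
    (hJ : ∀ i j : Fin 5, J i j = if (i : ℕ) + (j : ℕ) = 4 then 1 else 0)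
    (J4 : Matrix (Fin 4) (Fin 4) F)
    (hJ4 : ∀ i j : Fin 4, J4 i j = if (i : ℕ) + (j : ℕ) = 3 then 1 else 0)
    (e3 : Fin 5 → F) (he3 : e3 = ![0,0,1,0,0])
    (g : Matrix (Fin 5) (Fin 5) F) (hg : gᵀ * J * g = J) (hgdet : g.det = 1) :
    (g.mulVec e3 = e3 ↔
      (g 2 2 = 1 ∧ (∀ i : Fin 5, i ≠ 2 → g i 2 = 0) ∧ (∀ j : Fin 5, j ≠ 2 → g 2 j = 0)
        ∧ (g.submatrix (Fin.succAbove 2) (Fin.succAbove 2))ᵀ * J4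
            * g.submatrix (Fin.succAbove 2) (Fin.succAbove 2) = J4
        ∧ (g.submatrix (Fin.succAbove 2) (Fin.succAbove 2)).det = 1))
    ∧ 2 * g.mulVec e3 0 * g.mulVec e3 4 + 2 * g.mulVec e3 1 * g.mulVec e3 3
        + (g.mulVec e3 2) ^ 2 = 1 := by
  have hQ : ∀ x : Fin 5 → F, x ⬝ᵥ J *ᵥ x = 2 * x 0 * x 4 + 2 * x 1 * x 3 + x 2 ^ 2 := by
    intro x
    simp only [dotProduct, mulVec, Fin.sum_univ_five, hJ, Fin.coe_ofNat_eq_mod, Nat.reduceMod,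
      Nat.reduceEqDiff, ↓reduceIte, zero_mul, add_zero, zero_add]
    ring
  have he3 : e3 = Pi.single 2 1 := by
    rw [he3]; ext i; fin_cases i <;> rfl
  have hJrow : J.row 2 = Pi.single 2 1 := by
    ext j; fin_cases j <;> simp [hJ]
  have hJ4 : J4 = J.submatrix (Fin.succAbove 2) (Fin.succAbove 2) := by
    ext a b; fin_cases a <;> fin_cases b <;> rw [hJ4, submatrix_apply, hJ] <;> rfl
  rw [he3]
  refine ⟨⟨fun hfix => ?_, fun ⟨h22, hcol, _⟩ => mulVec_single_one_eq_self_iff.2 ⟨h22, hcol⟩⟩, ?_⟩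
  · obtain ⟨h22, hcol⟩ := mulVec_single_one_eq_self_iff.1 hfix
    have hrow_eq : g.row 2 = Pi.single 2 1 := by
      simpa [single_one_vecMul, hJrow] using vecMul_mul_eq_of_mulVec_eq hg hfix
    have hrow : ∀ j ≠ 2, g 2 j = 0 := fun j hj => by simpa [hj] using congrFun hrow_eq j
    refine ⟨h22, hcol, hrow, ?_, ?_⟩
    · rw [hJ4, ← submatrix_transpose_mul_mul_of_row_eq_zero hrow, hg]
    · rw [← hgdet, det_eq_mul_det_submatrix_of_col_eq_zero hcol, h22, one_mul]
  · rw [← hQ, dotProduct_mulVec_mulVec_of_transpose_mul_mul_eq hg, hQ]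
    simp

/-- for `g ∈ G = SO(3,2;F)`, stabilizing `e₃` is equivalent to being of
block shape `diag(1-block at (3,3))` with the complementary 4×4 block in `SO(J₄)`;
moreover `g·e₃` always lies on the sphere `Q(v,v) = 1`. -/
theorem stmt_2 {F : Type*} [Field F] (h2 : (2 : F) ≠ 0)
    (J : Matrix (Fin 5) (Fin 5) F)
    (hJ : ∀ i j : Fin 5, J i j = if (i : ℕ) + (j : ℕ) = 4 then 1 else 0)
    (J4 : Matrix (Fin 4) (Fin 4) F)
    (hJ4 : ∀ i j : Fin 4, J4 i j = if (i : ℕ) + (j : ℕ) = 3 then 1 else 0)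
    (e3 : Fin 5 → F) (he3 : e3 = ![0,0,1,0,0])
    (g : Matrix (Fin 5) (Fin 5) F) (hg : gᵀ * J * g = J) (hgdet : g.det = 1) :
    (g.mulVec e3 = e3 ↔
      (g 2 2 = 1 ∧ (∀ i : Fin 5, i ≠ 2 → g i 2 = 0) ∧ (∀ j : Fin 5, j ≠ 2 → g 2 j = 0)
        ∧ (g.submatrix (Fin.succAbove 2) (Fin.succAbove 2))ᵀ * J4
            * g.submatrix (Fin.succAbove 2) (Fin.succAbove 2) = J4
        ∧ (g.submatrix (Fin.succAbove 2) (Fin.succAbove 2)).det = 1))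
    ∧ 2 * g.mulVec e3 0 * g.mulVec e3 4 + 2 * g.mulVec e3 1 * g.mulVec e3 3
        + (g.mulVec e3 2) ^ 2 = 1 :=
  stmt_2_general J hJ J4 hJ4 e3 he3 g hg hgdet
end

section
/- Let F be a field with char F ≠ 2 and let θ ∈ Fˣ be a non-square. Put v₀ = (0, 2θ, 0, 1, 0) ∈ F⁵, and let E be the 5×5 matrix with E₁₁ = E₃₃ = E₅₅ = −1, E₂₄ = 2θ, E₄₂ = 1/(2θ), and all other entries 0. Then Q(v₀, v₀) = 4θ, and for g ∈ G the following are equivalent: (i) g·v₀ = v₀; (ii) g₄₁ = −g₂₁/(2θ), g₄₃ = −g₂₃/(2θ), g₄₅ = −g₂₅/(2θ), g₄₂ = (1−g₂₂)/(2θ), g₄₄ = g₂₂, g₁₄ = −2θ·g₁₂, g₃₄ = −2θ·g₃₂, g₅₄ = −2θ·g₅₂, and g₂₄ = 2θ·(1−g₂₂). Moreover, every g ∈ G with g·v₀ = v₀ commutes with E: g·E = E·g. -/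
open Matrix

set_option maxHeartbeats 1000000 in
/-- the non-split case. For a non-square `θ` and `v₀ = (0,2θ,0,1,0)`,
`Q(v₀,v₀) = 4θ`; for `g ∈ G = SO(3,2;F)`, stabilizing `v₀` is equivalent to the
explicit list of entry conditions describing `C_θ ≅ SO(3,1)`; and any such `g`
commutes with the matrix `E`. -/
theorem stmt_3 {F : Type*} [Field F] (h2 : (2 : F) ≠ 0)
    (θ : F) (hθ : θ ≠ 0) (hsq : ¬ ∃ s : F, s ^ 2 = θ)
    (J : Matrix (Fin 5) (Fin 5) F)
    (hJ : ∀ i j : Fin 5, J i j = if (i : ℕ) + (j : ℕ) = 4 then 1 else 0)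
    (v₀ : Fin 5 → F) (hv₀ : v₀ = ![0, 2*θ, 0, 1, 0])
    (E : Matrix (Fin 5) (Fin 5) F)
    (hE : E = !![-1, 0, 0, 0, 0;
                 0, 0, 0, 2*θ, 0;
                 0, 0, -1, 0, 0;
                 0, 1/(2*θ), 0, 0, 0;
                 0, 0, 0, 0, -1]) :
    -- Q(v₀, v₀) = 4θ
    (2 * v₀ 0 * v₀ 4 + 2 * v₀ 1 * v₀ 3 + (v₀ 2) ^ 2 = 4 * θ)
    ∧ ∀ g : Matrix (Fin 5) (Fin 5) F, gᵀ * J * g = J → g.det = 1 →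
      ((g.mulVec v₀ = v₀ ↔
         (g 3 0 = -(g 1 0)/(2*θ) ∧ g 3 2 = -(g 1 2)/(2*θ) ∧ g 3 4 = -(g 1 4)/(2*θ)
          ∧ g 3 1 = (1 - g 1 1)/(2*θ) ∧ g 3 3 = g 1 1
          ∧ g 0 3 = -(2*θ) * g 0 1 ∧ g 2 3 = -(2*θ) * g 2 1 ∧ g 4 3 = -(2*θ) * g 4 1
          ∧ g 1 3 = 2*θ*(1 - g 1 1)))
       ∧ (g.mulVec v₀ = v₀ → g * E = E * g)) := by
  clear hsq
  have ha : (2 : F) * θ ≠ 0 := mul_ne_zero h2 hθ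
  subst hv₀ hE
  have hJ' : J = !![0,0,0,0,1;0,0,0,1,0;0,0,1,0,0;0,1,0,0,0;1,0,0,0,0] := by
    ext i j; rw [hJ]; fin_cases i <;> fin_cases j <;> simp [vecHead, vecTail]
  clear hJ; subst hJ'
  refine ⟨by simp; ring, ?_⟩
  intro g hg _hdet
  -- row equations: components of g.mulVec v₀
  have hrow : ∀ i : Fin 5, (g.mulVec ![0, 2*θ, 0, 1, 0]) i = g i 1 * (2*θ) + g i 3 := by
    intro i
    simp [Matrix.mulVec, dotProduct, Fin.sum_univ_five]
  -- the key column equations from gᵀ J g = J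
  have key : ∀ (_ : g.mulVec ![0, 2*θ, 0, 1, 0] = ![0, 2*θ, 0, 1, 0]) (j : Fin 5),
      g 1 j + g 3 j * (2*θ) = (![0, 1, 0, 2*θ, 0] : Fin 5 → F) j := by
    intro hgv j
    have hw : (!![0,0,0,0,1;0,0,0,1,0;0,0,1,0,0;0,1,0,0,0;1,0,0,0,0] :
        Matrix (Fin 5) (Fin 5) F).mulVec ![0, 2*θ, 0, 1, 0] = ![0, 1, 0, 2*θ, 0] := by
      funext i
      fin_cases i <;> simp [Matrix.mulVec, dotProduct, Fin.sum_univ_five]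
    have h1 := congrArg (fun M : Matrix (Fin 5) (Fin 5) F =>
      M.mulVec ![0, 2*θ, 0, 1, 0]) hg
    simp only [← Matrix.mulVec_mulVec, hgv, hw] at h1
    have h2' := congrFun h1 j
    simp only [Matrix.mulVec, dotProduct, Fin.sum_univ_five, Matrix.transpose_apply] at h2'
    calc g 1 j + g 3 j * (2*θ)
        = gᵀ j 0 * (0:F) + gᵀ j 1 * 1 + gᵀ j 2 * 0 + gᵀ j 3 * (2*θ) + gᵀ j 4 * 0 := by
          simp [Matrix.transpose_apply]
      _ = _ := h2'
  constructor
  · constructor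
    · intro hgv
      have r0 : g 0 1 * (2*θ) + g 0 3 = 0 := by
        have h := congrFun hgv 0; rw [hrow 0] at h; simpa using h
      have r1 : g 1 1 * (2*θ) + g 1 3 = 2*θ := by
        have h := congrFun hgv 1; rw [hrow 1] at h; simpa using h
      have r2 : g 2 1 * (2*θ) + g 2 3 = 0 := by
        have h := congrFun hgv 2; rw [hrow 2] at h; simpa using h
      have r4 : g 4 1 * (2*θ) + g 4 3 = 0 := by
        have h := congrFun hgv 4; rw [hrow 4] at h; simpa using h
      have c0 : g 1 0 + g 3 0 * (2*θ) = 0 := by simpa using key hgv 0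
      have c1 : g 1 1 + g 3 1 * (2*θ) = 1 := by simpa using key hgv 1
      have c2 : g 1 2 + g 3 2 * (2*θ) = 0 := by simpa using key hgv 2
      have c3 : g 1 3 + g 3 3 * (2*θ) = 2*θ := by simpa using key hgv 3
      have c4 : g 1 4 + g 3 4 * (2*θ) = 0 := by simpa using key hgv 4
      refine ⟨?_, ?_, ?_, ?_, ?_, ?_, ?_, ?_, ?_⟩
      · rw [eq_div_iff ha]; linear_combination c0
      · rw [eq_div_iff ha]; linear_combination c2
      · rw [eq_div_iff ha]; linear_combination c4
      · rw [eq_div_iff ha]; linear_combination c1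
      · exact mul_left_cancel₀ ha (by linear_combination c3 - r1)
      · linear_combination r0
      · linear_combination r2
      · linear_combination r4
      · linear_combination r1
    · rintro ⟨-, -, -, h31, h33, h03, h23, h43, h13⟩
      funext i
      fin_cases i <;>
        simp [Matrix.mulVec, dotProduct, Fin.sum_univ_five, h03, h13, h23, h43, h31, h33]
      · ring
      · ring
      · ring
      · rw [div_mul_cancel₀ (1 - g 1 1) ha]; ring
      · ring
  · intro hgv
    have r0 : g 0 1 * (2*θ) + g 0 3 = 0 := by
      have h := congrFun hgv 0; rw [hrow 0] at h; simpa using h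
    have r1 : g 1 1 * (2*θ) + g 1 3 = 2*θ := by
      have h := congrFun hgv 1; rw [hrow 1] at h; simpa using h
    have r2 : g 2 1 * (2*θ) + g 2 3 = 0 := by
      have h := congrFun hgv 2; rw [hrow 2] at h; simpa using h
    have r4 : g 4 1 * (2*θ) + g 4 3 = 0 := by
      have h := congrFun hgv 4; rw [hrow 4] at h; simpa using h
    have c0 : g 1 0 + g 3 0 * (2*θ) = 0 := by simpa using key hgv 0
    have c1 : g 1 1 + g 3 1 * (2*θ) = 1 := by simpa using key hgv 1
    have c2 : g 1 2 + g 3 2 * (2*θ) = 0 := by simpa using key hgv 2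
    have c3 : g 1 3 + g 3 3 * (2*θ) = 2*θ := by simpa using key hgv 3
    have c4 : g 1 4 + g 3 4 * (2*θ) = 0 := by simpa using key hgv 4
    have e5 : g 3 3 = g 1 1 := mul_left_cancel₀ ha (by linear_combination c3 - r1)
    clear hrow key hgv hg _hdet
    ext i j
    fin_cases i <;> fin_cases j <;>
      simp [Matrix.mul_apply, Fin.sum_univ_five, vecHead, vecTail] <;>
      (try field_simp [hθ]) <;>
      first
        | ring1
        | linear_combination c0 | linear_combination -c0
        | linear_combination c2 | linear_combination -c2
        | linear_combination c4 | linear_combination -c4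
        | linear_combination r0 | linear_combination -r0
        | linear_combination r2 | linear_combination -r2
        | linear_combination r4 | linear_combination -r4
        | linear_combination e5 | linear_combination -e5
        | linear_combination c3 - r1 | linear_combination r1 - c3
        | linear_combination r1 - 2*θ*c1 | linear_combination 2*θ*c1 - r1
end

section
/- Let p be an odd prime, v₁ = (1/2, 0, 0, 0, 1) ∈ ℚ_p⁵, and for r ∈ ℕ let d_r = diag(p^r, 1, 1, 1, p^{−r}). Let x = (x₁,…,x₅) ∈ ℚ_p⁵ satisfy 2x₁x₅ + 2x₂x₄ + x₃² = 1. Then for every r ∈ ℕ: there exists k ∈ K with k·(d_r·v₁) = x if and only if max_{1≤i≤5} ‖x_i‖ = p^r. Consequently every point of the sphere {v ∈ ℚ_p⁵ : 2v₁v₅ + 2v₂v₄ + v₃² = 1} lies in exactly one K-orbit K·(d_r·v₁), r ≥ 0. -/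
/-!
`K` preserves `Q` and the sup norm on `ℚ_p⁵`: its elements are integral with integral inverse
`J kᵀ J`. Since `d_r v₁ = p⁻ʳ (p²ʳ/2, 0, 0, 0, 1)` has norm `p^r`, so does every point of its orbit.
Conversely, if `‖x‖ = p^r` then `y = p^r x` is primitive with `Q(y) = p²ʳ`. An Eichler
transformation followed by `J` moves a unit into the first coordinate of `y`; then another
Eichler transformation, `J` and `diag(y₁, 1, 1, 1, y₁⁻¹)` carry `y` to `(Q(y)/2, 0, 0, 0, 1)`,
which is `p^r d_r v₁`. Uniqueness of `r`: `Q(x) = 1` forces `‖x‖ ≥ 1`, and nonzero `p`-adic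
norms are integral powers of `p`.
-/

open Matrix

noncomputable section

variable (p : ℕ) [Fact p.Prime]

/-- The 5×5 matrix `J` over `ℚ_p`. -/
def J5 : Matrix (Fin 5) (Fin 5) ℚ_[p] :=
  Matrix.of fun i j => if (i : ℕ) + (j : ℕ) = 4 then 1 else 0

/-- The maximal compact subgroup `K = SO(3,2;ℤ_p)` of `G`. -/
def Kgp : Set (Matrix (Fin 5) (Fin 5) ℚ_[p]) :=
  {g | gᵀ * J5 p * g = J5 p ∧ g.det = 1 ∧ ∀ i j, ‖g i j‖ ≤ 1}

/-- The matrix `d_r = diag(p^r, 1, 1, 1, p^{−r})`. -/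
def dmat (r : ℕ) : Matrix (Fin 5) (Fin 5) ℚ_[p] :=
  Matrix.diagonal ![(p : ℚ_[p]) ^ r, 1, 1, 1, ((p : ℚ_[p]) ^ r)⁻¹]

theorem pi_norm_eq_iff {ι E : Type*} [Fintype ι] [Nonempty ι] [SeminormedAddGroup E]
    (f : ι → E) (C : ℝ) : ‖f‖ = C ↔ (∀ i, ‖f i‖ ≤ C) ∧ ∃ i, ‖f i‖ = C := by
  constructor
  · rintro rfl
    exact ⟨norm_le_pi_norm f, (IsGreatest.pi_norm f).1⟩
  · rintro ⟨hle, i, rfl⟩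
    exact le_antisymm ((pi_norm_le_iff_of_nonempty f).2 hle) (norm_le_pi_norm f i)

section Ultrametric

variable {R : Type*} [NormedRing R] [IsUltrametricDist R]

theorem norm_dotProduct_le {n : Type*} [Fintype n] (u v : n → R) : ‖u ⬝ᵥ v‖ ≤ ‖u‖ * ‖v‖ :=
  IsUltrametricDist.norm_sum_le_of_forall_le_of_nonneg (by positivity) fun i _ =>
    (norm_mul_le _ _).trans <|
      mul_le_mul (norm_le_pi_norm u i) (norm_le_pi_norm v i) (norm_nonneg _) (norm_nonneg _)

theorem norm_mulVec_le_of_forall_norm_le_one {m n : Type*} [Fintype m] [Fintype n]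
    {A : Matrix m n R} (hA : ∀ i j, ‖A i j‖ ≤ 1) (v : n → R) : ‖A *ᵥ v‖ ≤ ‖v‖ :=
  (pi_norm_le_iff_of_nonneg (norm_nonneg v)).2 fun i =>
    (norm_dotProduct_le _ _).trans <| mul_le_of_le_one_left (norm_nonneg v) <|
      (pi_norm_le_iff_of_nonneg zero_le_one).2 (hA i)

theorem norm_mul_apply_le_one {l m n : Type*} [Fintype m] {A : Matrix l m R} {B : Matrix m n R}
    (hA : ∀ i j, ‖A i j‖ ≤ 1) (hB : ∀ i j, ‖B i j‖ ≤ 1) (i : l) (j : n) : ‖(A * B) i j‖ ≤ 1 := by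
  rw [Matrix.mul_apply']
  exact (norm_dotProduct_le _ _).trans <| mul_le_one₀
    ((pi_norm_le_iff_of_nonneg zero_le_one).2 (hA i)) (norm_nonneg _)
    ((pi_norm_le_iff_of_nonneg zero_le_one).2 fun k => hB k j)

end Ultrametric

variable {p}

namespace Padic

theorem norm_two_eq_one (hp : p ≠ 2) : ‖(2 : ℚ_[p])‖ = 1 := by
  exact_mod_cast norm_natCast_eq_one_iff.2 ((Nat.coprime_primes Fact.out Nat.prime_two).2 hp)

theorem natCast_pow_ne_zero (r : ℕ) : (p : ℚ_[p]) ^ r ≠ 0 :=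
  pow_ne_zero r (Nat.cast_ne_zero.2 (Fact.out : p.Prime).ne_zero)

theorem norm_p_pow_eq_inv (r : ℕ) : ‖(p : ℚ_[p]) ^ r‖ = ((p : ℝ) ^ r)⁻¹ := by
  rw [norm_p_pow, _root_.zpow_neg, zpow_natCast]

theorem exists_norm_eq_pow_of_one_le_norm {z : ℚ_[p]} (hz : 1 ≤ ‖z‖) :
    ∃ r : ℕ, ‖z‖ = (p : ℝ) ^ r := by
  have hp1 : (1 : ℝ) < p := Nat.one_lt_cast.2 (Fact.out : p.Prime).one_lt
  have hz0 : z ≠ 0 := norm_pos_iff.1 (zero_lt_one.trans_le hz)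
  rw [norm_eq_zpow_neg_valuation hz0] at hz ⊢
  lift -z.valuation to ℕ using (one_le_zpow_iff_right₀ hp1).1 hz with r
  exact ⟨r, zpow_natCast _ r⟩

end Padic

def quadForm (v : Fin 5 → ℚ_[p]) : ℚ_[p] :=
  2 * v 0 * v 4 + 2 * v 1 * v 3 + v 2 ^ 2

theorem quadForm_smul (c : ℚ_[p]) (v : Fin 5 → ℚ_[p]) :
    quadForm (c • v) = c ^ 2 * quadForm v := by
  simp only [quadForm, Pi.smul_apply, smul_eq_mul]
  ring

theorem J5_mulVec (v : Fin 5 → ℚ_[p]) : J5 p *ᵥ v = ![v 4, v 3, v 2, v 1, v 0] := by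
  ext i
  fin_cases i <;> simp [J5, Matrix.mulVec, dotProduct, Fin.sum_univ_five]

theorem quadForm_eq_dotProduct (v : Fin 5 → ℚ_[p]) : quadForm v = v ⬝ᵥ J5 p *ᵥ v := by
  simp only [quadForm, dotProduct, J5_mulVec, Fin.sum_univ_five, cons_val_zero, cons_val_one,
    cons_val]
  ring

theorem J5_mul_J5 : J5 p * J5 p = 1 := by
  ext i j
  fin_cases i <;> fin_cases j <;> simp [J5, Matrix.mul_apply, Fin.sum_univ_five]

theorem transpose_J5 : (J5 p)ᵀ = J5 p := by
  ext i j
  simp [J5, add_comm]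

theorem det_J5 : (J5 p).det = 1 := by
  simp [J5, Matrix.det_succ_row_zero, Fin.sum_univ_succ, Fin.succAbove]
  norm_num

theorem one_mem_Kgp : (1 : Matrix (Fin 5) (Fin 5) ℚ_[p]) ∈ Kgp p :=
  ⟨by simp, Matrix.det_one, fun i j => by by_cases h : i = j <;> simp [Matrix.one_apply, h]⟩

theorem J5_mem_Kgp : J5 p ∈ Kgp p := by
  refine ⟨by rw [transpose_J5, J5_mul_J5, Matrix.one_mul], det_J5, fun i j => ?_⟩
  by_cases h : (i : ℕ) + j = 4 <;> simp [J5, h]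

section Kgp

variable {g h : Matrix (Fin 5) (Fin 5) ℚ_[p]}

theorem mul_mem_Kgp (hg : g ∈ Kgp p) (hh : h ∈ Kgp p) : g * h ∈ Kgp p := by
  refine ⟨?_, by rw [Matrix.det_mul, hg.2.1, hh.2.1, one_mul], norm_mul_apply_le_one hg.2.2 hh.2.2⟩
  calc (g * h)ᵀ * J5 p * (g * h) = hᵀ * (gᵀ * J5 p * g) * h := by
        simp only [Matrix.transpose_mul, Matrix.mul_assoc]
    _ = J5 p := by rw [hg.1, hh.1]

theorem inv_eq_of_mem_Kgp (hg : g ∈ Kgp p) : g⁻¹ = J5 p * gᵀ * J5 p :=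
  Matrix.inv_eq_left_inv <| by
    rw [Matrix.mul_assoc, Matrix.mul_assoc, ← Matrix.mul_assoc _ _ g, hg.1, J5_mul_J5]

theorem inv_mem_Kgp (hg : g ∈ Kgp p) : g⁻¹ ∈ Kgp p := by
  have hgT : gᵀ ∈ Kgp p := by
    refine ⟨?_, by rw [Matrix.det_transpose, hg.2.1], fun i j => hg.2.2 j i⟩
    have := congrArg (· * J5 p) (Matrix.mul_nonsing_inv g (by simp [hg.2.1]))
    simpa [inv_eq_of_mem_Kgp hg, Matrix.mul_assoc, J5_mul_J5] using this
  rw [inv_eq_of_mem_Kgp hg]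
  exact mul_mem_Kgp (mul_mem_Kgp J5_mem_Kgp hgT) J5_mem_Kgp

theorem inv_mul_of_mem_Kgp (hg : g ∈ Kgp p) : g⁻¹ * g = 1 :=
  Matrix.nonsing_inv_mul g (by simp [hg.2.1])

theorem quadForm_mulVec_of_mem_Kgp (hg : g ∈ Kgp p) (v : Fin 5 → ℚ_[p]) :
    quadForm (g *ᵥ v) = quadForm v := by
  rw [quadForm_eq_dotProduct, quadForm_eq_dotProduct, Matrix.mulVec_mulVec,
    Matrix.dotProduct_mulVec, ← Matrix.vecMul_transpose, Matrix.vecMul_vecMul, ← Matrix.mul_assoc,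
    hg.1, Matrix.dotProduct_mulVec]

theorem norm_mulVec_of_mem_Kgp (hg : g ∈ Kgp p) (v : Fin 5 → ℚ_[p]) : ‖g *ᵥ v‖ = ‖v‖ := by
  refine le_antisymm (norm_mulVec_le_of_forall_norm_le_one hg.2.2 v) ?_
  calc ‖v‖ = ‖g⁻¹ *ᵥ (g *ᵥ v)‖ := by
        rw [Matrix.mulVec_mulVec, inv_mul_of_mem_Kgp hg, Matrix.one_mulVec]
    _ ≤ ‖g *ᵥ v‖ := norm_mulVec_le_of_forall_norm_le_one (inv_mem_Kgp hg).2.2 _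

end Kgp

def torus (u : ℚ_[p]) : Matrix (Fin 5) (Fin 5) ℚ_[p] :=
  Matrix.diagonal ![u, 1, 1, 1, u⁻¹]

theorem torus_mulVec (u : ℚ_[p]) (v : Fin 5 → ℚ_[p]) :
    torus u *ᵥ v = ![u * v 0, v 1, v 2, v 3, u⁻¹ * v 4] := by
  ext i
  fin_cases i <;> simp [torus, Matrix.mulVec_diagonal]

theorem torus_mem_Kgp {u : ℚ_[p]} (hu : ‖u‖ = 1) : torus u ∈ Kgp p := by
  have hu0 : u ≠ 0 := norm_ne_zero_iff.1 (by rw [hu]; exact one_ne_zero)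
  refine ⟨?_, ?_, fun i j => ?_⟩
  · ext i j
    fin_cases i <;> fin_cases j <;> simp [torus, J5, hu0]
  · simp [torus, Fin.prod_univ_five, hu0]
  · by_cases h : i = j
    · subst h
      fin_cases i <;> simp [torus, hu]
    · simp [torus, h]

/-- The Eichler transformation `v ↦ v + Q(v,e₅) w − Q(v,w) e₅ − ½ Q(w,w) Q(v,e₅) e₅`
with `w = −(a e₂ + b e₃ + c e₄)`. -/
def eichler (a b c : ℚ_[p]) : Matrix (Fin 5) (Fin 5) ℚ_[p] :=
  !![1, 0, 0, 0, 0;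
     -a, 1, 0, 0, 0;
     -b, 0, 1, 0, 0;
     -c, 0, 0, 1, 0;
     -(a * c + b ^ 2 / 2), c, b, a, 1]

theorem eichler_mulVec (a b c : ℚ_[p]) (v : Fin 5 → ℚ_[p]) :
    eichler a b c *ᵥ v = ![v 0, v 1 - a * v 0, v 2 - b * v 0, v 3 - c * v 0,
      v 4 - (a * c + b ^ 2 / 2) * v 0 + c * v 1 + b * v 2 + a * v 3] := by
  ext i
  fin_cases i <;> simp [eichler, Matrix.mulVec, dotProduct, Fin.sum_univ_five] <;> ring

theorem eichler_mem_Kgp (hp : p ≠ 2) {a b c : ℚ_[p]} (ha : ‖a‖ ≤ 1) (hb : ‖b‖ ≤ 1)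
    (hc : ‖c‖ ≤ 1) : eichler a b c ∈ Kgp p := by
  have habc : ‖a * c + b ^ 2 / 2‖ ≤ 1 := by
    refine (IsUltrametricDist.norm_add_le_max _ _).trans (max_le ?_ ?_)
    · rw [norm_mul]
      exact mul_le_one₀ ha (norm_nonneg _) hc
    · rw [norm_div, Padic.norm_two_eq_one hp, div_one, norm_pow]
      exact pow_le_one₀ (norm_nonneg _) hb
  refine ⟨?_, ?_, fun i j => ?_⟩
  · ext i j
    fin_cases i <;> fin_cases j <;> simp [eichler, J5, Matrix.mul_apply, Fin.sum_univ_five]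
    ring
  · rw [Matrix.det_of_isLowerTriangular]
    · simp [eichler, Fin.prod_univ_five]
    · intro i j hij
      rw [OrderDual.toDual_lt_toDual] at hij
      fin_cases i <;> fin_cases j <;> simp_all [eichler]
  · fin_cases i <;> fin_cases j <;> simp [eichler, ha, hb, hc, habc, -neg_add_rev]

theorem exists_mem_Kgp_mulVec_eq_of_norm_apply_zero (hp : p ≠ 2) {y : Fin 5 → ℚ_[p]}
    (hy : ‖y‖ ≤ 1) (h0 : ‖y 0‖ = 1) :
    ∃ g ∈ Kgp p, g *ᵥ y = ![quadForm y / 2, 0, 0, 0, 1] := by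
  have hy0 : y 0 ≠ 0 := norm_ne_zero_iff.1 (by rw [h0]; exact one_ne_zero)
  have hdiv : ∀ i, ‖y i / y 0‖ ≤ 1 := fun i => by
    rw [norm_div, h0, div_one]
    exact (norm_le_pi_norm y i).trans hy
  refine ⟨torus (y 0) * J5 p * eichler (y 1 / y 0) (y 2 / y 0) (y 3 / y 0),
    mul_mem_Kgp (mul_mem_Kgp (torus_mem_Kgp h0) J5_mem_Kgp)
      (eichler_mem_Kgp hp (hdiv 1) (hdiv 2) (hdiv 3)), ?_⟩
  rw [← Matrix.mulVec_mulVec, ← Matrix.mulVec_mulVec, eichler_mulVec, J5_mulVec, torus_mulVec]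
  ext i
  fin_cases i <;> simp [quadForm, hy0]
  field_simp
  ring

theorem exists_eichler_norm_mulVec_apply_four (hp : p ≠ 2) {y : Fin 5 → ℚ_[p]} (hy : ‖y‖ = 1)
    (h0 : ‖y 0‖ < 1) :
    ∃ a b c : ℚ_[p], ‖a‖ ≤ 1 ∧ ‖b‖ ≤ 1 ∧ ‖c‖ ≤ 1 ∧ ‖(eichler a b c *ᵥ y) 4‖ = 1 := by
  have hle : ∀ i, ‖y i‖ ≤ 1 := fun i => hy ▸ norm_le_pi_norm y i
  have add_unit : ∀ {s t : ℚ_[p]}, ‖s‖ < 1 → ‖t‖ = 1 → ‖s + t‖ = 1 := fun hs ht => by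
    rw [IsUltrametricDist.norm_add_eq_max_of_norm_ne_norm (by rw [ht]; exact hs.ne), ht,
      max_eq_right hs.le]
  by_cases h4 : ‖y 4‖ = 1
  · exact ⟨0, 0, 0, by simp [eichler_mulVec, h4]⟩
  replace h4 := lt_of_le_of_ne (hle 4) h4
  by_cases h1 : ‖y 1‖ = 1
  · exact ⟨0, 0, 1, by simpa [eichler_mulVec] using add_unit h4 h1⟩
  by_cases h3 : ‖y 3‖ = 1
  · exact ⟨1, 0, 0, by simpa [eichler_mulVec] using add_unit h4 h3⟩
  have h2 : ‖y 2‖ = 1 := by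
    obtain ⟨i, hi⟩ := (IsGreatest.pi_norm y).1
    rw [hy] at hi
    fin_cases i <;> simp_all
  have h40 : ‖y 4 - 2⁻¹ * y 0‖ < 1 := by
    rw [sub_eq_add_neg]
    refine (IsUltrametricDist.norm_add_le_max _ _).trans_lt (max_lt h4 ?_)
    rwa [norm_neg, norm_mul, norm_inv, Padic.norm_two_eq_one hp, inv_one, one_mul]
  refine ⟨0, 1, 0, by simp, by simp, by simp, ?_⟩
  simpa [eichler_mulVec] using add_unit h40 h2

theorem exists_mem_Kgp_norm_mulVec_apply_zero (hp : p ≠ 2) {y : Fin 5 → ℚ_[p]} (hy : ‖y‖ = 1) :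
    ∃ g ∈ Kgp p, ‖(g *ᵥ y) 0‖ = 1 := by
  by_cases h0 : ‖y 0‖ = 1
  · exact ⟨1, one_mem_Kgp, by rwa [Matrix.one_mulVec]⟩
  obtain ⟨a, b, c, ha, hb, hc, h4⟩ := exists_eichler_norm_mulVec_apply_four hp hy
    (lt_of_le_of_ne (hy ▸ norm_le_pi_norm y 0) h0)
  refine ⟨J5 p * eichler a b c, mul_mem_Kgp J5_mem_Kgp (eichler_mem_Kgp hp ha hb hc), ?_⟩
  rwa [← Matrix.mulVec_mulVec, J5_mulVec]

theorem exists_mem_Kgp_mulVec_eq (hp : p ≠ 2) {y : Fin 5 → ℚ_[p]} (hy : ‖y‖ = 1) :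
    ∃ g ∈ Kgp p, g *ᵥ y = ![quadForm y / 2, 0, 0, 0, 1] := by
  obtain ⟨g, hg, h0⟩ := exists_mem_Kgp_norm_mulVec_apply_zero hp hy
  obtain ⟨h, hh, hhg⟩ := exists_mem_Kgp_mulVec_eq_of_norm_apply_zero hp
    (norm_mulVec_of_mem_Kgp hg y ▸ hy).le h0
  refine ⟨h * g, mul_mem_Kgp hh hg, ?_⟩
  rw [← Matrix.mulVec_mulVec, hhg, quadForm_mulVec_of_mem_Kgp hg]

theorem norm_quadForm_le (v : Fin 5 → ℚ_[p]) : ‖quadForm v‖ ≤ ‖v‖ ^ 2 := by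
  rw [quadForm_eq_dotProduct, sq]
  exact (norm_dotProduct_le _ _).trans <| mul_le_mul_of_nonneg_left
    (norm_mulVec_le_of_forall_norm_le_one J5_mem_Kgp.2.2 v) (norm_nonneg v)

theorem exists_norm_eq_pow_of_quadForm_eq_one {x : Fin 5 → ℚ_[p]} (hx : quadForm x = 1) :
    ∃ r : ℕ, ‖x‖ = (p : ℝ) ^ r := by
  have hx1 : 1 ≤ ‖x‖ := by
    have := norm_quadForm_le x
    rwa [hx, norm_one, one_le_pow_iff_of_nonneg (norm_nonneg x) two_ne_zero] at this
  obtain ⟨i, hi⟩ := (IsGreatest.pi_norm x).1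
  rw [← hi] at hx1 ⊢
  exact Padic.exists_norm_eq_pow_of_one_le_norm hx1

theorem dmat_mulVec_v₁ (r : ℕ) : dmat p r *ᵥ ![1 / 2, 0, 0, 0, 1] =
    ((p : ℚ_[p]) ^ r)⁻¹ • ![((p : ℚ_[p]) ^ r) ^ 2 / 2, 0, 0, 0, 1] := by
  ext i
  fin_cases i <;> simp [dmat, Matrix.mulVec_diagonal]
  field_simp

theorem norm_dmat_mulVec_v₁ (hp : p ≠ 2) (r : ℕ) :
    ‖dmat p r *ᵥ ![1 / 2, 0, 0, 0, 1]‖ = (p : ℝ) ^ r := by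
  have hfirst : ‖((p : ℚ_[p]) ^ r) ^ 2 / 2‖ ≤ 1 := by
    rw [norm_div, Padic.norm_two_eq_one hp, div_one, norm_pow, Padic.norm_p_pow_eq_inv]
    exact pow_le_one₀ (by positivity) <|
      inv_le_one_of_one_le₀ (one_le_pow₀ (Nat.one_le_cast.2 (Fact.out : p.Prime).one_le))
  have hvec : ‖![((p : ℚ_[p]) ^ r) ^ 2 / 2, 0, 0, 0, 1]‖ = 1 := by
    refine (pi_norm_eq_iff _ 1).2 ⟨fun i => ?_, 4, by simp⟩
    fin_cases i <;> first | exact hfirst | simp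
  rw [dmat_mulVec_v₁, norm_smul, norm_inv, Padic.norm_p_pow_eq_inv, inv_inv, hvec, mul_one]

theorem exists_mem_Kgp_mulVec_dmat_eq_iff (hp : p ≠ 2) {x : Fin 5 → ℚ_[p]} (hx : quadForm x = 1)
    (r : ℕ) : (∃ k ∈ Kgp p, k *ᵥ (dmat p r *ᵥ ![1 / 2, 0, 0, 0, 1]) = x) ↔ ‖x‖ = (p : ℝ) ^ r := by
  constructor
  · rintro ⟨k, hk, rfl⟩
    rw [norm_mulVec_of_mem_Kgp hk, norm_dmat_mulVec_v₁ hp]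
  · intro hxr
    have hy : ‖(p : ℚ_[p]) ^ r • x‖ = 1 := by
      rw [norm_smul, hxr, Padic.norm_p_pow_eq_inv,
        inv_mul_cancel₀ (pow_pos (Nat.cast_pos.2 (Fact.out : p.Prime).pos) r).ne']
    obtain ⟨g, hg, hgy⟩ := exists_mem_Kgp_mulVec_eq hp hy
    rw [quadForm_smul, hx, mul_one] at hgy
    refine ⟨g⁻¹, inv_mem_Kgp hg, ?_⟩
    rw [dmat_mulVec_v₁, ← hgy, Matrix.mulVec_smul, Matrix.mulVec_mulVec, inv_mul_of_mem_Kgp hg,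
      Matrix.one_mulVec, smul_smul, inv_mul_cancel₀ (Padic.natCast_pow_ne_zero r), one_smul]

/-- split case: a point `x` of the sphere `Q(v,v) = 1` lies in the
`K`-orbit of `d_r·v₁` (with `v₁ = (1/2,0,0,0,1)`) iff `max ‖x_i‖ = p^r`;
consequently `x` lies in exactly one orbit `K·(d_r·v₁)`. -/
theorem stmt_6 (hp : p ≠ 2) (x : Fin 5 → ℚ_[p])
    (hx : 2 * x 0 * x 4 + 2 * x 1 * x 3 + (x 2) ^ 2 = 1) :
    (∀ r : ℕ,
      (∃ k ∈ Kgp p, k.mulVec ((dmat p r).mulVec ![1/2, 0, 0, 0, 1]) = x) ↔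
      ((∀ i, ‖x i‖ ≤ (p : ℝ) ^ r) ∧ ∃ i, ‖x i‖ = (p : ℝ) ^ r))
    ∧ ∃! r : ℕ, ∃ k ∈ Kgp p, k.mulVec ((dmat p r).mulVec ![1/2, 0, 0, 0, 1]) = x := by
  have horbit := exists_mem_Kgp_mulVec_dmat_eq_iff hp (x := x) hx
  refine ⟨fun r => (horbit r).trans (pi_norm_eq_iff x _), ?_⟩
  obtain ⟨r, hr⟩ := exists_norm_eq_pow_of_quadForm_eq_one (x := x) hx
  refine ⟨r, (horbit r).2 hr, fun s hs => ?_⟩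
  have hp1 : (1 : ℝ) < p := Nat.one_lt_cast.2 (Fact.out : p.Prime).one_lt
  exact pow_right_injective₀ (zero_lt_one.trans hp1) hp1.ne' (((horbit s).1 hs).symm.trans hr)

end
end

section
/- Let q > 1 be a real number, X ∈ ℂ with X ≠ 0 and X² ≠ 1, and let ε ∈ {1, −1}. Suppose a sequence T : ℕ → ℂ satisfies T₀ = 1, T₁ = (q^{3/2}(X + X⁻¹) − εq − 1)/(q³ − εq), and the recurrence q³·T_{r+1} − q^{3/2}(X + X⁻¹)·T_r + T_{r−1} = 0 for all r ≥ 1. Then for every r ≥ 1: T_r = c₊·(q^{−3/2}X)^r + c₋·(q^{−3/2}X⁻¹)^r, where c₊ = (q^{3/2}X − 1)(1 − ε·q^{−1/2}X⁻¹)/((X − X⁻¹)(q^{3/2} − ε·q^{−1/2})) and c₋ = −(q^{3/2}X⁻¹ − 1)(1 − ε·q^{−1/2}X)/((X − X⁻¹)(q^{3/2} − ε·q^{−1/2})). -/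
/-!
Both `T` and `r ↦ c₊ x^r + c₋ y^r`, with `x = q^{-3/2} X` and `y = q^{-3/2} X⁻¹`, solve the
second-order recurrence `q³ u (n+2) - q^{3/2}(X + X⁻¹) u (n+1) + u n = 0`, because `x` and `y`
are the roots of its characteristic polynomial `q³ t² - q^{3/2}(X + X⁻¹) t + 1`. The constants
`c₊, c₋` are exactly those matching `T₀` and `T₁`, so the two sequences agree. Throughout, `q` is
written as `s²` so that everything becomes rational-function identities in `s`, `X`, `ε`.
-/

section SecondOrderRecurrence

variable {R : Type*} [CommRing R]

theorem eq_of_second_order_recurrence [IsDomain R] {a b : R} (ha : a ≠ 0) {u v : ℕ → R}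
    (hu : ∀ n, a * u (n + 2) - b * u (n + 1) + u n = 0)
    (hv : ∀ n, a * v (n + 2) - b * v (n + 1) + v n = 0)
    (h0 : u 0 = v 0) (h1 : u 1 = v 1) (n : ℕ) : u n = v n := by
  suffices u n = v n ∧ u (n + 1) = v (n + 1) from this.1
  induction n with
  | zero => exact ⟨h0, h1⟩
  | succ n ih =>
    refine ⟨ih.2, mul_left_cancel₀ ha ?_⟩
    linear_combination hu n - hv n + b * ih.2 - ih.1

theorem pow_add_pow_second_order_recurrence {a b x y : R} (hx : a * x ^ 2 - b * x + 1 = 0)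
    (hy : a * y ^ 2 - b * y + 1 = 0) (A B : R) (n : ℕ) :
    a * (A * x ^ (n + 2) + B * y ^ (n + 2)) - b * (A * x ^ (n + 1) + B * y ^ (n + 1))
      + (A * x ^ n + B * y ^ n) = 0 := by
  linear_combination (A * x ^ n) * hx + (B * y ^ n) * hy

end SecondOrderRecurrence

section HeckeRecurrence

variable {K : Type*} [Field K] {s X ε : K}

theorem hecke_charpoly_root (hs : s ≠ 0) (hX : X ≠ 0) :
    (s ^ 2) ^ 3 * ((s ^ 3)⁻¹ * X) ^ 2 - s ^ 3 * (X + X⁻¹) * ((s ^ 3)⁻¹ * X) + 1 = 0 := by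
  field_simp
  ring

theorem sub_inv_ne_zero (hX0 : X ≠ 0) (hX1 : X ^ 2 ≠ 1) : X - X⁻¹ ≠ 0 := by
  rw [sub_ne_zero]
  intro h
  apply hX1
  field_simp at h
  linear_combination h

theorem pow_three_sub_mul_inv_ne_zero (hs : s ≠ 0) (hsε : s ^ 4 ≠ ε) :
    s ^ 3 - ε * s⁻¹ ≠ 0 := by
  rw [sub_ne_zero]
  intro h
  apply hsε
  field_simp at h
  linear_combination h

theorem hecke_closed_form_zero (hs : s ≠ 0) (hX0 : X ≠ 0) (hX1 : X ^ 2 ≠ 1)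
    (hsε : s ^ 4 ≠ ε) :
    (s ^ 3 * X - 1) * (1 - ε * s⁻¹ * X⁻¹) / ((X - X⁻¹) * (s ^ 3 - ε * s⁻¹))
      + -((s ^ 3 * X⁻¹ - 1) * (1 - ε * s⁻¹ * X) / ((X - X⁻¹) * (s ^ 3 - ε * s⁻¹))) = 1 := by
  have := sub_inv_ne_zero hX0 hX1
  have := pow_three_sub_mul_inv_ne_zero hs hsε
  field_simp
  ring

theorem hecke_closed_form_one (hs : s ≠ 0) (hX0 : X ≠ 0) (hX1 : X ^ 2 ≠ 1)
    (hsε : s ^ 4 ≠ ε) :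
    (s ^ 3 * X - 1) * (1 - ε * s⁻¹ * X⁻¹) / ((X - X⁻¹) * (s ^ 3 - ε * s⁻¹)) * ((s ^ 3)⁻¹ * X)
      + -((s ^ 3 * X⁻¹ - 1) * (1 - ε * s⁻¹ * X) / ((X - X⁻¹) * (s ^ 3 - ε * s⁻¹)))
        * ((s ^ 3)⁻¹ * X⁻¹)
      = (s ^ 3 * (X + X⁻¹) - ε * s ^ 2 - 1) / ((s ^ 2) ^ 3 - ε * s ^ 2) := by
  have := sub_inv_ne_zero hX0 hX1
  have := pow_three_sub_mul_inv_ne_zero hs hsε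
  have : (s ^ 2) ^ 3 - ε * s ^ 2 ≠ 0 := by
    rw [sub_ne_zero]
    intro h
    apply hsε
    field_simp at h
    linear_combination h
  field_simp
  ring

end HeckeRecurrence

/-- solution of the Hecke recurrence for the spherical function
`T_{r,ζ}`. Here `s = √q`, so `s³ = q^{3/2}` and `s⁻¹ = q^{−1/2}`; `ε = 1` is the
split case and `ε = −1` the non-split case. -/
theorem stmt_10 (q : ℝ) (hq : 1 < q) (X ε : ℂ) (hX0 : X ≠ 0) (hX1 : X ^ 2 ≠ 1)
    (hε : ε = 1 ∨ ε = -1)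
    (s : ℂ) (hs : s = ((Real.sqrt q : ℝ) : ℂ))
    (T : ℕ → ℂ) (hT0 : T 0 = 1)
    (hT1 : T 1 = (s ^ 3 * (X + X⁻¹) - ε * (q : ℂ) - 1) / ((q : ℂ) ^ 3 - ε * (q : ℂ)))
    (hrec : ∀ r : ℕ, 1 ≤ r →
      (q : ℂ) ^ 3 * T (r + 1) - s ^ 3 * (X + X⁻¹) * T r + T (r - 1) = 0) :
    ∀ r : ℕ, 1 ≤ r →
      T r = (s ^ 3 * X - 1) * (1 - ε * s⁻¹ * X⁻¹)
              / ((X - X⁻¹) * (s ^ 3 - ε * s⁻¹)) * ((s ^ 3)⁻¹ * X) ^ r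
          + (-((s ^ 3 * X⁻¹ - 1) * (1 - ε * s⁻¹ * X)
              / ((X - X⁻¹) * (s ^ 3 - ε * s⁻¹)))) * ((s ^ 3)⁻¹ * X⁻¹) ^ r := by
  have hs2 : s ^ 2 = (q : ℂ) := by
    rw [hs, ← Complex.ofReal_pow, Real.sq_sqrt (by linarith)]
  have hs0 : s ≠ 0 := by
    rw [hs]
    exact_mod_cast (Real.sqrt_pos.mpr (by linarith)).ne'
  have hsε : s ^ 4 ≠ ε := by
    intro h
    have hre := congrArg Complex.re h
    rw [show s ^ 4 = ((q ^ 2 : ℝ) : ℂ) by push_cast; rw [← hs2]; ring, Complex.ofReal_re] at hre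
    have hε_re : ε.re ≤ 1 := by rcases hε with rfl | rfl <;> norm_num
    nlinarith
  rw [← hs2] at hT1 hrec
  have hroot_inv := hecke_charpoly_root hs0 (inv_ne_zero hX0)
  rw [inv_inv, add_comm X⁻¹] at hroot_inv
  intro r _
  apply eq_of_second_order_recurrence (b := s ^ 3 * (X + X⁻¹))
    (pow_ne_zero 3 (pow_ne_zero 2 hs0))
  · exact fun n => by simpa using hrec (n + 1) n.succ_pos
  · exact pow_add_pow_second_order_recurrence (hecke_charpoly_root hs0 hX0) hroot_inv _ _
  · rw [hT0, pow_zero, pow_zero, mul_one, mul_one,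
      hecke_closed_form_zero hs0 hX0 hX1 hsε]
  · rw [hT1, pow_one, pow_one, hecke_closed_form_one hs0 hX0 hX1 hsε]
end

section
/- Let p be a prime and let ψ : ℚ_p → ℂ be an additive character of conductor ℤ_p. Let φ : GL₂(ℚ_p) → ℂ be a function such that φ([[1,x],[0,1]]·g) = ψ(−x)·φ(g) for all x ∈ ℚ_p and g ∈ GL₂(ℚ_p), and φ(g·k) = φ(g) for all g ∈ GL₂(ℚ_p) and all k ∈ GL₂(ℤ_p). Then φ(diag(α,1)) = 0 for every α ∈ ℚ_pˣ with ‖α‖ > 1. -/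
/-!
Write `n(x) = !![1, x; 0, 1]`. If `ψ x₀ ≠ 1` with `‖x₀‖ = p`, then `n(x₀) · diag(α, 1) = diag(α, 1) · n(x₀ / α)`, and for
`‖α‖ > 1` the norm of `α` is at least `p`, so `n(x₀ / α) ∈ GL₂(ℤ_p)`. Hence
`φ(diag(α, 1))` is fixed by multiplication by `ψ(x₀) ≠ 1`, i.e. it vanishes.
-/

open Matrix

theorem Padic.natCast_le_norm_of_one_lt_norm {p : ℕ} [Fact p.Prime] {x : ℚ_[p]}
    (hx : 1 < ‖x‖) : (p : ℝ) ≤ ‖x‖ := by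
  by_contra! h
  have := (Padic.norm_le_pow_iff_norm_lt_pow_add_one x 0).mpr (by simpa using h)
  simp only [zpow_zero] at this
  linarith

theorem unipotent_mul_diag_eq_diag_mul_unipotent {K : Type*} [Field K] {α : K} (hα : α ≠ 0)
    (x : K) : !![1, x; 0, 1] * !![α, 0; 0, 1] = !![α, 0; 0, 1] * !![1, x / α; 0, 1] := by
  simp [mul_div_cancel₀ x hα]

theorem norm_unipotent_apply_le_one {K : Type*} [NormedDivisionRing K] {y : K} (hy : ‖y‖ ≤ 1) :
    ∀ i j, ‖!![1, y; 0, 1] i j‖ ≤ 1 := by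
  intro i j
  fin_cases i <;> fin_cases j <;> simp [hy]

theorem stmt_12_general (p : ℕ) [Fact p.Prime]
    (ψ : ℚ_[p] → ℂ)
    (hψnt : ∃ x : ℚ_[p], ‖x‖ = (p : ℝ) ∧ ψ x ≠ 1)
    (φ : Matrix (Fin 2) (Fin 2) ℚ_[p] → ℂ)
    (hφN : ∀ (x : ℚ_[p]) (g : Matrix (Fin 2) (Fin 2) ℚ_[p]),
      φ (!![1, x; 0, 1] * g) = ψ (-x) * φ g)
    (hφK : ∀ (g k : Matrix (Fin 2) (Fin 2) ℚ_[p]),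
      (∀ i j, ‖k i j‖ ≤ 1) → ‖k.det‖ = 1 → φ (g * k) = φ g) :
    ∀ α : ℚ_[p], 1 < ‖α‖ → φ !![α, 0; 0, 1] = 0 := by
  intro α hα
  obtain ⟨x₀, hx₀, hψx₀⟩ := hψnt
  have hα0 : α ≠ 0 := norm_pos_iff.mp (one_pos.trans hα)
  have hx₀α : ‖-x₀ / α‖ ≤ 1 := by
    rw [norm_div, norm_neg, hx₀, div_le_one (one_pos.trans hα)]
    exact Padic.natCast_le_norm_of_one_lt_norm hα
  have hfixed : ψ x₀ * φ !![α, 0; 0, 1] = φ !![α, 0; 0, 1] :=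
    calc ψ x₀ * φ !![α, 0; 0, 1] = φ (!![1, -x₀; 0, 1] * !![α, 0; 0, 1]) := by rw [hφN, neg_neg]
      _ = φ (!![α, 0; 0, 1] * !![1, -x₀ / α; 0, 1]) := by
        rw [unipotent_mul_diag_eq_diag_mul_unipotent hα0]
      _ = φ !![α, 0; 0, 1] :=
        hφK _ _ (norm_unipotent_apply_le_one hx₀α) (by simp [det_fin_two_of])
  exact (mul_left_eq_self₀.mp hfixed).resolve_left hψx₀

/-- a function on `GL₂(ℚ_p)` transforming under the upper unipotent
subgroup by `ψ(−x)` (with `ψ` of conductor `ℤ_p`) and right-invariant under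
`GL₂(ℤ_p)` vanishes at `diag(α,1)` whenever `‖α‖ > 1`. -/
theorem stmt_12 (p : ℕ) [Fact p.Prime]
    (ψ : ℚ_[p] → ℂ)
    (hψadd : ∀ x y : ℚ_[p], ψ (x + y) = ψ x * ψ y)
    (hψ1 : ∀ x : ℚ_[p], ‖x‖ ≤ 1 → ψ x = 1)
    (hψnt : ∃ x : ℚ_[p], ‖x‖ = (p : ℝ) ∧ ψ x ≠ 1)
    (φ : Matrix (Fin 2) (Fin 2) ℚ_[p] → ℂ)
    (hφN : ∀ (x : ℚ_[p]) (g : Matrix (Fin 2) (Fin 2) ℚ_[p]),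
      φ (!![1, x; 0, 1] * g) = ψ (-x) * φ g)
    (hφK : ∀ (g k : Matrix (Fin 2) (Fin 2) ℚ_[p]),
      (∀ i j, ‖k i j‖ ≤ 1) → ‖k.det‖ = 1 → φ (g * k) = φ g) :
    ∀ α : ℚ_[p], 1 < ‖α‖ → φ !![α, 0; 0, 1] = 0 :=
  stmt_12_general p ψ hψnt φ hφN hφK
end

section
/- Let p be a prime, ψ an additive character of ℚ_p of conductor ℤ_p, and let χ : ℚ_pˣ → ℂˣ be a ramified multiplicative character of conductor m ≥ 1, i.e. χ(u) = 1 for every u ∈ 1 + p^mℤ_p, but χ(u₀) ≠ 1 for some unit u₀ ∈ 1 + p^{m−1}ℤ_p (for m = 1 this means χ is nontrivial on ℤ_pˣ). Then for every integer k with k ≠ m: ∫_{‖x‖ = p^k} ψ(x)·χ(x) d^×x = 0. -/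
/-!
Both vanishings are the usual invariance trick. For `k < m`, multiplying by a unit `u` with
`χ u ≠ 1` and `u ≡ 1 mod p^(m-1)` preserves the shell `‖x‖ = p^k`, the Haar measure, `ψ` and `‖x‖`,
so the integral equals `χ u` times itself. For `k > m`, translating by some `c` with `‖c‖ = p` and
`ψ c ≠ 1` preserves the shell, the Haar measure, `χ` (as `x + c ≡ x` mod `p^m x`) and `‖x‖`,
so the integral equals `ψ c` times itself.
-/

open MeasureTheory Metric
open scoped Pointwise

noncomputable section

variable (p : ℕ) [Fact p.Prime]

instance : MeasurableSpace ℚ_[p] := borel _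
instance : BorelSpace ℚ_[p] := ⟨rfl⟩

theorem setIntegral_eq_zero_of_comp_eq_mul {α 𝕜 : Type*} [MeasurableSpace α] [RCLike 𝕜]
    {μ : Measure α} {T : α → α} (hT : MeasurePreserving T μ μ) (hTe : MeasurableEmbedding T)
    {s : Set α} (hs : MeasurableSet s) (hTs : T ⁻¹' s = s) {F : α → 𝕜} {c : 𝕜} (hc : c ≠ 1)
    (hF : ∀ x ∈ s, F (T x) = c * F x) : ∫ x in s, F x ∂μ = 0 := by
  have hinv : c * ∫ x in s, F x ∂μ = ∫ x in s, F x ∂μ :=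
    calc c * ∫ x in s, F x ∂μ = ∫ x in s, F (T x) ∂μ := by
          rw [← integral_const_mul]
          exact setIntegral_congr_fun hs fun x hx => (hF x hx).symm
      _ = ∫ x in T ⁻¹' s, F (T x) ∂μ := by rw [hTs]
      _ = ∫ x in s, F x ∂μ := hT.setIntegral_preimage_emb hTe F s
  by_contra h0
  exact hc ((mul_eq_right₀ h0).mp hinv)

section HaarMeasure

variable {K : Type*} [NormedField K] [ProperSpace K]

theorem distribHaarChar_eq_one_of_norm_eq_one {u : Kˣ} (hu : ‖(u : K)‖ = 1) :
    distribHaarChar K u = 1 := by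
  borelize K
  have hball : u • closedBall (0 : K) 1 = closedBall 0 1 := by
    rw [Units.smul_def, smul_closedBall' u.ne_zero, smul_zero, hu, mul_one]
  refine distribHaarChar_eq_of_measure_smul_eq_mul (μ := Measure.addHaar)
    (measure_closedBall_pos _ _ one_pos).ne' (isCompact_closedBall 0 1).measure_lt_top.ne ?_
  simp [hball]

variable [MeasurableSpace K] [BorelSpace K]

theorem measurePreserving_mul_left_of_norm_eq_one (μ : Measure K) [μ.IsAddHaarMeasure]
    {u : K} (hu : ‖u‖ = 1) : MeasurePreserving (u * ·) μ μ := by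
  have hu0 : u ≠ 0 := norm_ne_zero_iff.mp (by simp [hu])
  refine ⟨(measurableEmbedding_mulLeft₀ hu0).measurable, Measure.ext fun s hs => ?_⟩
  have hpre : (u * ·) ⁻¹' s = (Units.mk0 u hu0)⁻¹ • s := by
    ext x
    simp [Units.smul_def, Set.mem_inv_smul_set_iff₀ hu0]
  rw [Measure.map_apply (measurableEmbedding_mulLeft₀ hu0).measurable hs, hpre,
    ← distribHaarChar_mul, map_inv, distribHaarChar_eq_one_of_norm_eq_one (by simpa using hu)]
  simp

end HaarMeasure

section Shells

variable {K : Type*} [NormedField K]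

theorem preimage_mul_left_setOf_norm_eq {u : K} (hu : ‖u‖ = 1) (r : ℝ) :
    (u * ·) ⁻¹' {x | ‖x‖ = r} = {x | ‖x‖ = r} := by
  ext x
  simp [hu]

variable [IsUltrametricDist K]

theorem norm_add_eq_left_of_norm_lt {x c : K} (h : ‖c‖ < ‖x‖) : ‖x + c‖ = ‖x‖ := by
  rw [IsUltrametricDist.norm_add_eq_max_of_norm_ne_norm h.ne', max_eq_left h.le]

theorem preimage_add_right_setOf_norm_eq {c : K} {r : ℝ} (hc : ‖c‖ < r) :
    (· + c) ⁻¹' {x | ‖x‖ = r} = {x | ‖x‖ = r} := by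
  ext x
  simp only [Set.mem_preimage, Set.mem_ofPred_eq]
  constructor
  · intro hx
    have hcx : ‖-c‖ < ‖x + c‖ := by rwa [norm_neg, hx]
    rw [← add_neg_cancel_right x c, norm_add_eq_left_of_norm_lt hcx, hx]
  · intro hx
    rw [norm_add_eq_left_of_norm_lt (hx ▸ hc), hx]

end Shells

theorem apply_eq_of_norm_sub_le_mul {K M : Type*} [NormedField K] [MulOneClass M] {χ : K → M}
    (hχmul : ∀ a b : K, a ≠ 0 → b ≠ 0 → χ (a * b) = χ a * χ b) {ε : ℝ}
    (hχ1 : ∀ u : K, ‖u - 1‖ ≤ ε → χ u = 1) {x y : K} (hx : x ≠ 0) (hy : y ≠ 0)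
    (h : ‖y - x‖ ≤ ε * ‖x‖) : χ y = χ x := by
  have hquot : ‖x⁻¹ * y - 1‖ ≤ ε := by
    rw [show x⁻¹ * y - 1 = x⁻¹ * (y - x) by field_simp, norm_mul, norm_inv, inv_mul_le_iff₀ (norm_pos_iff.mpr hx), mul_comm]
    exact h
  rw [show y = x * (x⁻¹ * y) by field_simp,
    hχmul x _ hx (mul_ne_zero (inv_ne_zero hx) hy), hχ1 _ hquot, mul_one]

theorem shell_integral_eq_zero_of_lt (μ : Measure ℚ_[p]) [μ.IsAddHaarMeasure]
    {ψ : ℚ_[p] → ℂ} (hψadd : ∀ x y : ℚ_[p], ψ (x + y) = ψ x * ψ y)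
    (hψ1 : ∀ x : ℚ_[p], ‖x‖ ≤ 1 → ψ x = 1)
    {χ : ℚ_[p] → ℂ} (hχmul : ∀ a b : ℚ_[p], a ≠ 0 → b ≠ 0 → χ (a * b) = χ a * χ b)
    {m : ℕ} (hχnt : ∃ u : ℚ_[p], ‖u‖ = 1 ∧ ‖u - 1‖ ≤ (p : ℝ) ^ (-((m : ℤ) - 1)) ∧ χ u ≠ 1)
    {k : ℤ} (hk : k < m) :
    ∫ x in {x : ℚ_[p] | ‖x‖ = (p : ℝ) ^ k}, (‖x‖ : ℂ)⁻¹ * (ψ x * χ x) ∂μ = 0 := by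
  have hp : (1 : ℝ) < p := mod_cast (Fact.out : p.Prime).one_lt
  obtain ⟨u, hu1, hu2, hχu⟩ := hχnt
  have hu0 : u ≠ 0 := norm_ne_zero_iff.mp (by simp [hu1])
  refine setIntegral_eq_zero_of_comp_eq_mul (measurePreserving_mul_left_of_norm_eq_one μ hu1)
    (measurableEmbedding_mulLeft₀ hu0) (measurableSet_eq_fun measurable_norm measurable_const)
    (preimage_mul_left_setOf_norm_eq hu1 _) hχu fun x hx => ?_
  have hx : ‖x‖ = (p : ℝ) ^ k := hx
  have hx0 : x ≠ 0 := norm_ne_zero_iff.mp (by rw [hx]; positivity)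
  have hψu : ψ (u * x) = ψ x := by
    have hsmall : ‖(u - 1) * x‖ ≤ 1 :=
      calc ‖(u - 1) * x‖ ≤ (p : ℝ) ^ (-((m : ℤ) - 1)) * (p : ℝ) ^ k := by
            rw [norm_mul, hx]; gcongr
        _ = (p : ℝ) ^ (k - (m - 1)) := by rw [← zpow_add₀ (by positivity)]; ring_nf
        _ ≤ 1 := zpow_le_one_of_nonpos₀ hp.le (by omega)
    rw [show u * x = x + (u - 1) * x by ring, hψadd, hψ1 _ hsmall, mul_one]
  simp only [norm_mul, hu1, one_mul, hψu, hχmul u x hu0 hx0]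
  ring

theorem shell_integral_eq_zero_of_gt (μ : Measure ℚ_[p]) [μ.IsAddHaarMeasure]
    {ψ : ℚ_[p] → ℂ} (hψadd : ∀ x y : ℚ_[p], ψ (x + y) = ψ x * ψ y)
    (hψnt : ∃ x : ℚ_[p], ‖x‖ = (p : ℝ) ∧ ψ x ≠ 1)
    {χ : ℚ_[p] → ℂ} (hχmul : ∀ a b : ℚ_[p], a ≠ 0 → b ≠ 0 → χ (a * b) = χ a * χ b)
    {m : ℕ} (hm : 1 ≤ m) (hχ1 : ∀ u : ℚ_[p], ‖u - 1‖ ≤ (p : ℝ) ^ (-(m : ℤ)) → χ u = 1)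
    {k : ℤ} (hk : m < k) :
    ∫ x in {x : ℚ_[p] | ‖x‖ = (p : ℝ) ^ k}, (‖x‖ : ℂ)⁻¹ * (ψ x * χ x) ∂μ = 0 := by
  have hp : (1 : ℝ) < p := mod_cast (Fact.out : p.Prime).one_lt
  obtain ⟨c, hc, hψc⟩ := hψnt
  have hck : ‖c‖ < (p : ℝ) ^ k := by
    rw [hc]
    simpa using zpow_lt_zpow_right₀ hp (show (1 : ℤ) < k by omega)
  refine setIntegral_eq_zero_of_comp_eq_mul (measurePreserving_add_right μ c)
    (measurableEmbedding_addRight c) (measurableSet_eq_fun measurable_norm measurable_const)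
    (preimage_add_right_setOf_norm_eq hck) hψc fun x hx => ?_
  have hx : ‖x‖ = (p : ℝ) ^ k := hx
  have hxc : ‖x + c‖ = ‖x‖ := norm_add_eq_left_of_norm_lt (hx ▸ hck)
  have hχc : χ (x + c) = χ x := by
    refine apply_eq_of_norm_sub_le_mul hχmul hχ1 (norm_ne_zero_iff.mp (by rw [hx]; positivity))
      (norm_ne_zero_iff.mp (by rw [hxc, hx]; positivity)) ?_
    calc ‖x + c - x‖ = (p : ℝ) ^ (1 : ℤ) := by rw [add_sub_cancel_left, hc, zpow_one]
      _ ≤ (p : ℝ) ^ (-(m : ℤ) + k) := zpow_le_zpow_right₀ hp.le (by omega)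
      _ = (p : ℝ) ^ (-(m : ℤ)) * ‖x‖ := by rw [zpow_add₀ (by positivity), hx]
  simp only [hxc, hψadd, hχc]
  ring

theorem stmt_14 (μ : Measure ℚ_[p]) [μ.IsAddHaarMeasure]
    (ψ : ℚ_[p] → ℂ)
    (hψadd : ∀ x y : ℚ_[p], ψ (x + y) = ψ x * ψ y)
    (hψ1 : ∀ x : ℚ_[p], ‖x‖ ≤ 1 → ψ x = 1)
    (hψnt : ∃ x : ℚ_[p], ‖x‖ = (p : ℝ) ∧ ψ x ≠ 1)
    (χ : ℚ_[p] → ℂ)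
    (hχmul : ∀ a b : ℚ_[p], a ≠ 0 → b ≠ 0 → χ (a * b) = χ a * χ b)
    (m : ℕ) (hm : 1 ≤ m)
    (hχ1 : ∀ u : ℚ_[p], ‖u - 1‖ ≤ (p : ℝ) ^ (-(m : ℤ)) → χ u = 1)
    (hχnt : ∃ u : ℚ_[p], ‖u‖ = 1 ∧ ‖u - 1‖ ≤ (p : ℝ) ^ (-((m : ℤ) - 1)) ∧ χ u ≠ 1) :
    ∀ k : ℤ, k ≠ (m : ℤ) →
      (1 - 1/(p : ℝ))⁻¹ •
        ∫ x in {x : ℚ_[p] | ‖x‖ = (p : ℝ) ^ k}, (‖x‖ : ℂ)⁻¹ * (ψ x * χ x) ∂μ = 0 := by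
  intro k hk
  rcases hk.lt_or_gt with hlt | hgt
  · rw [shell_integral_eq_zero_of_lt p μ hψadd hψ1 hχmul hχnt hlt, smul_zero]
  · rw [shell_integral_eq_zero_of_gt p μ hψadd hψnt hχmul hm hχ1 hgt, smul_zero]

end
end
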